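/- arXiv:2511.21656 — 5 statements merged into one kernel-verified Lean document; each statement's English description precedes it below -/
import Mathlib

section
/- Let X, Y, Z be bounded subsets of ℝ and δ > 0. Then the δ-covering number of X − Z is at most a universal constant times (covering number of X − Y) · (covering number of Y − Z) / (covering number of Y), provided Y is nonempty. -/
open scoped Pointwise

/-- The minimal number of closed balls of radius `δ` needed to cover `A ⊆ ℝ`. -/
noncomputable def covN (δ : ℝ) (A : Set ℝ) : ℕ :=
  sInf {n : ℕ | ∃ s : Finset ℝ, s.card = n ∧ A ⊆ ⋃ x ∈ s, Metric.closedBall x δ}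

/-!
Round every point to the nearest point of the lattice `δℤ`. The rounded copy `A'` of a bounded
set `A` is finite, and `A' - B'` and `A - B` lie within `δ` of each other. Hence `δ`-balls around
`A' - B'` cover `A - B`; conversely every point of `A' - B'` lies within `2δ` of a centre of a
minimal `δ`-cover of `A - B`, and a `2δ`-ball holds at most `5` lattice points. So
`|A - B|_δ ≤ #(A' - B') ≤ 5 |A - B|_δ` and `|Y|_δ ≤ #Y'`, and Ruzsa's triangle inequality for the
finite sets `X', Y', Z'` gives the claim with `C = 25`.
-/

open Finset Metric Bornology

noncomputable def roundToMultiple (δ x : ℝ) : ℝ := δ * round (x / δ)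

lemma roundToMultiple_mem_zmultiples (δ x : ℝ) :
    roundToMultiple δ x ∈ AddSubgroup.zmultiples δ :=
  ⟨round (x / δ), by simp [roundToMultiple, mul_comm]⟩

lemma dist_roundToMultiple_le {δ : ℝ} (hδ : 0 < δ) (x : ℝ) :
    dist x (roundToMultiple δ x) ≤ δ / 2 := by
  have hround : |x / δ - round (x / δ)| ≤ 1 / 2 := abs_sub_round (x / δ)
  have hx : x - roundToMultiple δ x = δ * (x / δ - round (x / δ)) := by
    simp only [roundToMultiple]; field_simp
  rw [Real.dist_eq, hx, abs_mul, abs_of_pos hδ]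
  linarith [mul_le_mul_of_nonneg_left hround hδ.le]

lemma subset_biUnion_closedBall_image_roundToMultiple {δ : ℝ} (hδ : 0 < δ) (A : Set ℝ) :
    A ⊆ ⋃ a ∈ roundToMultiple δ '' A, closedBall a (δ / 2) := fun x hx =>
  Set.mem_biUnion (Set.mem_image_of_mem _ hx) (dist_roundToMultiple_le hδ x)

lemma image_roundToMultiple_subset_biUnion_closedBall {δ : ℝ} (hδ : 0 < δ) (A : Set ℝ) :
    roundToMultiple δ '' A ⊆ ⋃ a ∈ A, closedBall a (δ / 2) := by
  rintro _ ⟨x, hx, rfl⟩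
  exact Set.mem_biUnion hx (by rw [mem_closedBall, dist_comm]; exact dist_roundToMultiple_le hδ x)

lemma finite_image_roundToMultiple {δ : ℝ} (hδ : 0 < δ) {A : Set ℝ} (hA : IsBounded A) :
    (roundToMultiple δ '' A).Finite := by
  have hsub : roundToMultiple δ '' A ⊆ cthickening (δ / 2) A ∩ AddSubgroup.zmultiples δ :=
    Set.subset_inter
      ((image_roundToMultiple_subset_biUnion_closedBall hδ A).trans
        (Set.iUnion₂_subset fun x hx => closedBall_subset_cthickening hx _))
      (Set.image_subset_iff.2 fun x _ => roundToMultiple_mem_zmultiples δ x)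
  refine (finite_isBounded_inter_isClosed ?_ hA.cthickening
    AddSubgroup.isClosed_of_discrete).subset hsub
  exact SetLike.isDiscrete_iff_discreteTopology.2 inferInstance

lemma sub_subset_biUnion_closedBall {E : Type*} [SeminormedAddCommGroup E] {A B A' B' : Set E}
    {r s : ℝ} (hA : A ⊆ ⋃ a ∈ A', closedBall a r) (hB : B ⊆ ⋃ b ∈ B', closedBall b s) :
    A - B ⊆ ⋃ c ∈ A' - B', closedBall c (r + s) := by
  rintro _ ⟨a, ha, b, hb, rfl⟩
  obtain ⟨a', ha', haa'⟩ := Set.mem_iUnion₂.1 (hA ha)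
  obtain ⟨b', hb', hbb'⟩ := Set.mem_iUnion₂.1 (hB hb)
  refine Set.mem_biUnion (Set.sub_mem_sub ha' hb') ?_
  rw [mem_closedBall] at *
  exact (dist_sub_sub_le a b a' b').trans (add_le_add haa' hbb')

lemma covN_le_card {δ : ℝ} {A : Set ℝ} {s : Finset ℝ}
    (h : A ⊆ ⋃ x ∈ (s : Set ℝ), closedBall x δ) : covN δ A ≤ #s :=
  Nat.sInf_le ⟨s, rfl, by rwa [set_biUnion_coe] at h⟩

lemma card_le_of_subset_zmultiples_inter_closedBall {δ c : ℝ} (hδ : 0 < δ) (n : ℕ)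
    {W : Finset ℝ} (hW : (W : Set ℝ) ⊆ AddSubgroup.zmultiples δ ∩ closedBall c (n * δ)) :
    #W ≤ 2 * n + 1 := by
  set m : ℤ := ⌈c / δ - n⌉
  have hmul : ∀ w ∈ W, δ * round (w / δ) = w := by
    intro w hw
    obtain ⟨k, rfl⟩ := AddSubgroup.mem_zmultiples_iff.1 (hW hw).1
    simp [hδ.ne', mul_comm]
  have hmaps : ∀ w ∈ W, round (w / δ) ∈ Icc m (m + 2 * n) := by
    intro w hw
    have hk : |(round (w / δ) : ℝ) - c / δ| ≤ n := by
      rw [← mul_div_cancel_left₀ (round (w / δ) : ℝ) hδ.ne', hmul w hw, ← sub_div, abs_div,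
        abs_of_pos hδ, div_le_iff₀ hδ]
      exact (hW hw).2
    have hm : c / δ - n ≤ m := Int.le_ceil _
    rw [mem_Icc, Int.ceil_le]
    refine ⟨by linarith [(abs_le.1 hk).1], ?_⟩
    exact_mod_cast (show (round (w / δ) : ℝ) ≤ m + 2 * n by linarith [(abs_le.1 hk).2])
  calc #W ≤ #(Icc m (m + 2 * n)) :=
        card_le_card_of_injOn _ hmaps fun w hw v hv h => by
          rw [← hmul w hw, ← hmul v hv]; exact congrArg (fun k : ℤ => δ * k) h
    _ = 2 * n + 1 := by rw [Int.card_Icc]; omega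

section Discretization

variable {δ : ℝ} {A B : Set ℝ} {A' B' : Finset ℝ}

lemma subset_biUnion_closedBall_of_coe_eq_image (hδ : 0 < δ)
    (hA' : (A' : Set ℝ) = roundToMultiple δ '' A) : A ⊆ ⋃ x ∈ (A' : Set ℝ), closedBall x δ := by
  refine (subset_biUnion_closedBall_image_roundToMultiple hδ A).trans ?_
  rw [hA']
  exact Set.biUnion_mono subset_rfl fun x _ => closedBall_subset_closedBall (by linarith)

lemma exists_card_eq_covN (hδ : 0 < δ) (hA : IsBounded A) :
    ∃ s : Finset ℝ, #s = covN δ A ∧ A ⊆ ⋃ x ∈ (s : Set ℝ), closedBall x δ := by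
  obtain ⟨s, hs⟩ := (finite_image_roundToMultiple hδ hA).exists_finset_coe
  simp only [set_biUnion_coe]
  refine Nat.sInf_mem (s := {n | ∃ s : Finset ℝ, #s = n ∧ A ⊆ ⋃ x ∈ s, closedBall x δ})
    ⟨#s, s, rfl, ?_⟩
  simpa only [set_biUnion_coe] using subset_biUnion_closedBall_of_coe_eq_image hδ hs

lemma card_le_five_mul_covN (hδ : 0 < δ) (hA : IsBounded A) {W : Finset ℝ}
    (hW : (W : Set ℝ) ⊆ AddSubgroup.zmultiples δ) (hWA : (W : Set ℝ) ⊆ ⋃ p ∈ A, closedBall p δ) :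
    #W ≤ 5 * covN δ A := by
  obtain ⟨s, hs, hAs⟩ := exists_card_eq_covN hδ hA
  have hcover : W ⊆ s.biUnion fun c => W.filter fun w => dist w c ≤ 2 * δ := by
    intro w hw
    obtain ⟨p, hp, hwp⟩ := Set.mem_iUnion₂.1 (hWA hw)
    obtain ⟨c, hc, hpc⟩ := Set.mem_iUnion₂.1 (hAs hp)
    refine mem_biUnion.2 ⟨c, hc, mem_filter.2 ⟨hw, ?_⟩⟩
    rw [mem_closedBall] at hwp hpc
    linarith [dist_triangle w p c]
  calc #W ≤ #(s.biUnion fun c => W.filter fun w => dist w c ≤ 2 * δ) := card_le_card hcover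
    _ ≤ #s * 5 := card_biUnion_le_card_mul _ _ _ fun c _ =>
        card_le_of_subset_zmultiples_inter_closedBall hδ 2 fun w hw => by
          rw [coe_filter] at hw
          exact ⟨hW hw.1, by exact_mod_cast hw.2⟩
    _ = 5 * covN δ A := by rw [hs, mul_comm]

lemma covN_sub_le_card_sub (hδ : 0 < δ) (hA' : (A' : Set ℝ) = roundToMultiple δ '' A)
    (hB' : (B' : Set ℝ) = roundToMultiple δ '' B) : covN δ (A - B) ≤ #(A' - B') := by
  refine covN_le_card ?_
  rw [coe_sub, hA', hB']
  simpa only [add_halves] using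
    sub_subset_biUnion_closedBall (subset_biUnion_closedBall_image_roundToMultiple hδ A)
      (subset_biUnion_closedBall_image_roundToMultiple hδ B)

lemma card_sub_le_five_mul_covN_sub (hδ : 0 < δ) (hA : IsBounded A) (hB : IsBounded B)
    (hA' : (A' : Set ℝ) = roundToMultiple δ '' A) (hB' : (B' : Set ℝ) = roundToMultiple δ '' B) :
    #(A' - B') ≤ 5 * covN δ (A - B) := by
  refine card_le_five_mul_covN hδ (hA.sub hB) ?_ ?_
  · rw [coe_sub, hA', hB', Set.sub_subset_iff]
    rintro _ ⟨a, -, rfl⟩ _ ⟨b, -, rfl⟩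
    exact sub_mem (roundToMultiple_mem_zmultiples δ a) (roundToMultiple_mem_zmultiples δ b)
  · rw [coe_sub, hA', hB']
    simpa only [add_halves] using
      sub_subset_biUnion_closedBall (image_roundToMultiple_subset_biUnion_closedBall hδ A)
        (image_roundToMultiple_subset_biUnion_closedBall hδ B)

end Discretization

/-- Ruzsa triangle inequality for δ-covering numbers:
`|X − Z|_δ ≲ |X − Y|_δ |Y − Z|_δ / |Y|_δ` with a universal constant. -/
theorem ruzsa_triangle_covering :
    ∃ C : ℝ, 0 < C ∧ ∀ δ : ℝ, 0 < δ → ∀ X Y Z : Set ℝ,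
      Bornology.IsBounded X → Bornology.IsBounded Y → Bornology.IsBounded Z →
      Y.Nonempty →
      (covN δ (X - Z) : ℝ) * covN δ Y ≤ C * covN δ (X - Y) * covN δ (Y - Z) := by
  refine ⟨25, by norm_num, fun δ hδ X Y Z hX hY hZ _ => ?_⟩
  obtain ⟨X', hX'⟩ := (finite_image_roundToMultiple hδ hX).exists_finset_coe
  obtain ⟨Y', hY'⟩ := (finite_image_roundToMultiple hδ hY).exists_finset_coe
  obtain ⟨Z', hZ'⟩ := (finite_image_roundToMultiple hδ hZ).exists_finset_coe
  have hruzsa : #(X' - Z') * #Y' ≤ #(X' - Y') * #(Y' - Z') := by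
    simpa only [← card_neg (Z' - Y'), neg_sub] using ruzsa_triangle_inequality_sub_sub_sub X' Y' Z'
  have key : covN δ (X - Z) * covN δ Y ≤ 25 * covN δ (X - Y) * covN δ (Y - Z) :=
    calc covN δ (X - Z) * covN δ Y ≤ #(X' - Z') * #Y' :=
          Nat.mul_le_mul (covN_sub_le_card_sub hδ hX' hZ')
            (covN_le_card (subset_biUnion_closedBall_of_coe_eq_image hδ hY'))
      _ ≤ #(X' - Y') * #(Y' - Z') := hruzsa
      _ ≤ (5 * covN δ (X - Y)) * (5 * covN δ (Y - Z)) :=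
          Nat.mul_le_mul (card_sub_le_five_mul_covN_sub hδ hX hY hX' hY')
            (card_sub_le_five_mul_covN_sub hδ hY hZ hY' hZ')
      _ = 25 * covN δ (X - Y) * covN δ (Y - Z) := by ring
  exact_mod_cast key
end

section
/- Let X, Y be nonempty bounded subsets of ℝ and δ > 0. Then max(|X − X|_δ, |X + X|_δ) ≲ |X + Y|_δ² / |Y|_δ, and the same bound holds with X − Y in place of X + Y. -/
open scoped Pointwise

namespace CovAux

/-- Discretization of `A` at scale `δ`. -/
noncomputable def dz (δ : ℝ) (A : Set ℝ) : Set ℤ := (fun x => ⌊x / δ⌋) '' A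

variable {δ : ℝ}

lemma dz_finite (hδ : 0 < δ) {A : Set ℝ} (hA : Bornology.IsBounded A) :
    (dz δ A).Finite := by
  obtain ⟨r, hr⟩ := hA.subset_closedBall 0
  refine (Set.finite_Icc ⌊(-r) / δ⌋ ⌊r / δ⌋).subset ?_
  rintro _ ⟨x, hx, rfl⟩
  have h := hr hx
  rw [Metric.mem_closedBall, Real.dist_eq, sub_zero, abs_le] at h
  exact ⟨Int.floor_le_floor (by gcongr; exact h.1), Int.floor_le_floor (by gcongr; exact h.2)⟩

lemma subset_cover (hδ : 0 < δ) {A : Set ℝ} (hA : Bornology.IsBounded A) :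
    A ⊆ ⋃ x ∈ (dz_finite hδ hA).toFinset.image (fun k : ℤ => (k : ℝ) * δ),
      Metric.closedBall x δ := by
  intro x hx
  simp only [Set.mem_iUnion, Finset.mem_image, Set.Finite.mem_toFinset]
  refine ⟨(⌊x / δ⌋ : ℝ) * δ, ⟨⌊x / δ⌋, ⟨x, hx, rfl⟩, rfl⟩, ?_⟩
  rw [Metric.mem_closedBall, Real.dist_eq, abs_le]
  have h1 : (⌊x / δ⌋ : ℝ) * δ ≤ x := by
    have := mul_le_mul_of_nonneg_right (Int.floor_le (x / δ)) hδ.le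
    rwa [div_mul_cancel₀ x hδ.ne'] at this
  have h2 : x < ((⌊x / δ⌋ : ℝ) + 1) * δ := by
    have := mul_lt_mul_of_pos_right (Int.lt_floor_add_one (x / δ)) hδ
    rwa [div_mul_cancel₀ x hδ.ne'] at this
  constructor <;> nlinarith

lemma covN_mem (hδ : 0 < δ) {A : Set ℝ} (hA : Bornology.IsBounded A) :
    ∃ s : Finset ℝ, s.card = covN δ A ∧ A ⊆ ⋃ x ∈ s, Metric.closedBall x δ := by
  have hne : {n : ℕ | ∃ s : Finset ℝ, s.card = n ∧
      A ⊆ ⋃ x ∈ s, Metric.closedBall x δ}.Nonempty :=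
    ⟨_, ⟨_, rfl, subset_cover hδ hA⟩⟩
  exact Nat.sInf_mem hne

lemma covN_le_ncard (hδ : 0 < δ) {A : Set ℝ} (hA : Bornology.IsBounded A) :
    covN δ A ≤ (dz δ A).ncard := by
  calc covN δ A ≤ ((dz_finite hδ hA).toFinset.image (fun k : ℤ => (k : ℝ) * δ)).card :=
        Nat.sInf_le ⟨_, rfl, subset_cover hδ hA⟩
    _ ≤ (dz_finite hδ hA).toFinset.card := Finset.card_image_le
    _ = (dz δ A).ncard := (Set.ncard_eq_toFinset_card _ (dz_finite hδ hA)).symm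

lemma ncard_le_three (hδ : 0 < δ) {A : Set ℝ} (hA : Bornology.IsBounded A) :
    (dz δ A).ncard ≤ 3 * covN δ A := by
  obtain ⟨s, hcard, hcov⟩ := covN_mem hδ hA
  have hsub : dz δ A ⊆ ↑(s.biUnion fun c => Finset.Icc (⌊c / δ⌋ - 1) (⌊c / δ⌋ + 1)) := by
    rintro _ ⟨x, hx, rfl⟩
    have hx' := hcov hx
    simp only [Set.mem_iUnion] at hx'
    obtain ⟨c, hc, hxc⟩ := hx'
    rw [Metric.mem_closedBall, Real.dist_eq, abs_le] at hxc
    simp only [Finset.coe_biUnion, Set.mem_iUnion, Finset.mem_coe, Finset.mem_Icc]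
    refine ⟨c, hc, ?_, ?_⟩
    · have h2 : ⌊(c - δ) / δ⌋ ≤ ⌊x / δ⌋ := Int.floor_le_floor (by gcongr; linarith)
      rwa [sub_div, div_self hδ.ne', Int.floor_sub_one] at h2
    · have h2 : ⌊x / δ⌋ ≤ ⌊(c + δ) / δ⌋ := Int.floor_le_floor (by gcongr; linarith)
      rwa [add_div, div_self hδ.ne', Int.floor_add_one] at h2
  calc (dz δ A).ncard ≤ (s.biUnion fun c => Finset.Icc (⌊c / δ⌋ - 1) (⌊c / δ⌋ + 1)).card := by
        rw [← Set.ncard_coe_finset]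
        exact Set.ncard_le_ncard hsub (Finset.finite_toSet _)
    _ ≤ ∑ c ∈ s, (Finset.Icc (⌊c / δ⌋ - 1) (⌊c / δ⌋ + 1)).card := Finset.card_biUnion_le
    _ = ∑ _c ∈ s, 3 := by
        refine Finset.sum_congr rfl fun c _ => ?_
        rw [Int.card_Icc]
        omega
    _ = 3 * covN δ A := by rw [Finset.sum_const, smul_eq_mul, hcard, Nat.mul_comm]

lemma ncard_le_two_mul {P Q : Set ℤ} (hQ : Q.Finite) {c : ℤ}
    (h : P ⊆ Q ∪ (fun n => n + c) '' Q) : P.ncard ≤ 2 * Q.ncard := by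
  calc P.ncard ≤ (Q ∪ (fun n => n + c) '' Q).ncard :=
        Set.ncard_le_ncard h (hQ.union (hQ.image _))
    _ ≤ Q.ncard + ((fun n => n + c) '' Q).ncard := Set.ncard_union_le _ _
    _ = 2 * Q.ncard := by
        rw [Set.ncard_image_of_injective _ (add_left_injective c)]; ring

lemma floor_add_bounds (hδ : 0 < δ) (a b : ℝ) :
    ⌊a / δ⌋ + ⌊b / δ⌋ ≤ ⌊(a + b) / δ⌋ ∧ ⌊(a + b) / δ⌋ ≤ ⌊a / δ⌋ + ⌊b / δ⌋ + 1 := by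
  have ha := Int.floor_le (a / δ); have hb := Int.floor_le (b / δ)
  have ha' := Int.lt_floor_add_one (a / δ); have hb' := Int.lt_floor_add_one (b / δ)
  constructor
  · refine Int.le_floor.2 ?_
    rw [add_div]; push_cast; linarith
  · have : ⌊(a + b) / δ⌋ < ⌊a / δ⌋ + ⌊b / δ⌋ + 2 := by
      refine Int.floor_lt.2 ?_
      rw [add_div]; push_cast; linarith
    omega

lemma floor_sub_bounds (hδ : 0 < δ) (a b : ℝ) :
    ⌊a / δ⌋ - ⌊b / δ⌋ - 1 ≤ ⌊(a - b) / δ⌋ ∧ ⌊(a - b) / δ⌋ ≤ ⌊a / δ⌋ - ⌊b / δ⌋ := by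
  have ha := Int.floor_le (a / δ); have hb := Int.floor_le (b / δ)
  have ha' := Int.lt_floor_add_one (a / δ); have hb' := Int.lt_floor_add_one (b / δ)
  constructor
  · refine Int.le_floor.2 ?_
    rw [sub_div]; push_cast; linarith
  · have : ⌊(a - b) / δ⌋ < ⌊a / δ⌋ - ⌊b / δ⌋ + 1 := by
      refine Int.floor_lt.2 ?_
      rw [sub_div]; push_cast; linarith
    omega

lemma dz_add_subset (hδ : 0 < δ) (A B : Set ℝ) :
    dz δ (A + B) ⊆ (dz δ A + dz δ B) ∪ (fun n => n + 1) '' (dz δ A + dz δ B) := by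
  rintro _ ⟨z, hz, rfl⟩
  obtain ⟨a, ha, b, hb, rfl⟩ := Set.mem_add.1 hz
  show ⌊(a + b) / δ⌋ ∈ _
  obtain ⟨l1, l2⟩ := floor_add_bounds hδ a b
  have hmem : ⌊a / δ⌋ + ⌊b / δ⌋ ∈ dz δ A + dz δ B :=
    Set.add_mem_add ⟨a, ha, rfl⟩ ⟨b, hb, rfl⟩
  rcases (by omega : ⌊(a + b) / δ⌋ = ⌊a / δ⌋ + ⌊b / δ⌋ ∨
      ⌊(a + b) / δ⌋ = ⌊a / δ⌋ + ⌊b / δ⌋ + 1) with h | h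
  · exact Or.inl (h ▸ hmem)
  · exact Or.inr ⟨_, hmem, h.symm⟩

lemma dz_add_superset (hδ : 0 < δ) (A B : Set ℝ) :
    dz δ A + dz δ B ⊆ dz δ (A + B) ∪ (fun n => n + (-1)) '' dz δ (A + B) := by
  rintro _ ⟨_, ⟨a, ha, rfl⟩, _, ⟨b, hb, rfl⟩, rfl⟩
  show ⌊a / δ⌋ + ⌊b / δ⌋ ∈ _
  obtain ⟨l1, l2⟩ := floor_add_bounds hδ a b
  have hmem : ⌊(a + b) / δ⌋ ∈ dz δ (A + B) := ⟨a + b, Set.add_mem_add ha hb, rfl⟩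
  rcases (by omega : ⌊a / δ⌋ + ⌊b / δ⌋ = ⌊(a + b) / δ⌋ ∨
      ⌊a / δ⌋ + ⌊b / δ⌋ = ⌊(a + b) / δ⌋ + (-1)) with h | h
  · exact Or.inl (h ▸ hmem)
  · exact Or.inr ⟨_, hmem, h.symm⟩

lemma dz_sub_subset (hδ : 0 < δ) (A B : Set ℝ) :
    dz δ (A - B) ⊆ (dz δ A - dz δ B) ∪ (fun n => n + (-1)) '' (dz δ A - dz δ B) := by
  rintro _ ⟨z, hz, rfl⟩
  obtain ⟨a, ha, b, hb, rfl⟩ := Set.mem_sub.1 hz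
  show ⌊(a - b) / δ⌋ ∈ _
  obtain ⟨l1, l2⟩ := floor_sub_bounds hδ a b
  have hmem : ⌊a / δ⌋ - ⌊b / δ⌋ ∈ dz δ A - dz δ B :=
    Set.sub_mem_sub ⟨a, ha, rfl⟩ ⟨b, hb, rfl⟩
  rcases (by omega : ⌊(a - b) / δ⌋ = ⌊a / δ⌋ - ⌊b / δ⌋ ∨
      ⌊(a - b) / δ⌋ = (⌊a / δ⌋ - ⌊b / δ⌋) + (-1)) with h | h
  · exact Or.inl (h ▸ hmem)
  · exact Or.inr ⟨_, hmem, h.symm⟩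

lemma dz_sub_superset (hδ : 0 < δ) (A B : Set ℝ) :
    dz δ A - dz δ B ⊆ dz δ (A - B) ∪ (fun n => n + 1) '' dz δ (A - B) := by
  rintro _ ⟨_, ⟨a, ha, rfl⟩, _, ⟨b, hb, rfl⟩, rfl⟩
  show ⌊a / δ⌋ - ⌊b / δ⌋ ∈ _
  obtain ⟨l1, l2⟩ := floor_sub_bounds hδ a b
  have hmem : ⌊(a - b) / δ⌋ ∈ dz δ (A - B) := ⟨a - b, Set.sub_mem_sub ha hb, rfl⟩
  rcases (by omega : ⌊a / δ⌋ - ⌊b / δ⌋ = ⌊(a - b) / δ⌋ ∨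
      ⌊a / δ⌋ - ⌊b / δ⌋ = ⌊(a - b) / δ⌋ + 1) with h | h
  · exact Or.inl (h ▸ hmem)
  · exact Or.inr ⟨_, hmem, h.symm⟩

lemma chain {a b p q r n : ℕ} (ha : a ≤ 2 * p) (hb : b ≤ q) (hpq : p * q ≤ r * r)
    (hr : r ≤ 6 * n) : a * b ≤ 72 * n ^ 2 := by nlinarith

end CovAux

/-- For nonempty bounded `X, Y ⊆ ℝ`:
`max(|X − X|_δ, |X + X|_δ) ≲ |X ± Y|_δ² / |Y|_δ` with a universal constant. -/
theorem max_sum_diff_covering :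
    ∃ C : ℝ, 0 < C ∧ ∀ δ : ℝ, 0 < δ → ∀ X Y : Set ℝ,
      Bornology.IsBounded X → Bornology.IsBounded Y →
      X.Nonempty → Y.Nonempty →
      max (covN δ (X - X) : ℝ) (covN δ (X + X) : ℝ) * (covN δ Y : ℝ) ≤
          C * (covN δ (X + Y) : ℝ) ^ 2 ∧
      max (covN δ (X - X) : ℝ) (covN δ (X + X) : ℝ) * (covN δ Y : ℝ) ≤
          C * (covN δ (X - Y) : ℝ) ^ 2 := by
  refine ⟨72, by norm_num, ?_⟩
  intro δ hδ X Y hXb hYb _ _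
  have fX := CovAux.dz_finite hδ hXb
  have fY := CovAux.dz_finite hδ hYb
  set AX : Finset ℤ := fX.toFinset with hAXdef
  set AY : Finset ℤ := fY.toFinset with hAYdef
  have coeAX : (AX : Set ℤ) = CovAux.dz δ X := fX.coe_toFinset
  have coeAY : (AY : Set ℤ) = CovAux.dz δ Y := fY.coe_toFinset
  -- ncard of pointwise operations equals finset cards
  have hsum : (CovAux.dz δ X + CovAux.dz δ Y).ncard = (AX + AY).card := by
    rw [← Set.ncard_coe_finset (AX + AY), Finset.coe_add, coeAX, coeAY]
  have hsumXX : (CovAux.dz δ X + CovAux.dz δ X).ncard = (AX + AX).card := by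
    rw [← Set.ncard_coe_finset (AX + AX), Finset.coe_add, coeAX]
  have hsubXX : (CovAux.dz δ X - CovAux.dz δ X).ncard = (AX - AX).card := by
    rw [← Set.ncard_coe_finset (AX - AX), Finset.coe_sub, coeAX]
  have hsubXY : (CovAux.dz δ X - CovAux.dz δ Y).ncard = (AX - AY).card := by
    rw [← Set.ncard_coe_finset (AX - AY), Finset.coe_sub, coeAX, coeAY]
  have hAYcard : (CovAux.dz δ Y).ncard = AY.card := by
    rw [← Set.ncard_coe_finset AY, coeAY]
  -- upper bounds for the left factors
  have h1 : covN δ (X - X) ≤ 2 * (AX - AX).card := by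
    calc covN δ (X - X) ≤ (CovAux.dz δ (X - X)).ncard :=
          CovAux.covN_le_ncard hδ (hXb.sub hXb)
      _ ≤ 2 * (CovAux.dz δ X - CovAux.dz δ X).ncard :=
          CovAux.ncard_le_two_mul (fX.sub fX) (CovAux.dz_sub_subset hδ X X)
      _ = 2 * (AX - AX).card := by rw [hsubXX]
  have h2 : covN δ (X + X) ≤ 2 * (AX + AX).card := by
    calc covN δ (X + X) ≤ (CovAux.dz δ (X + X)).ncard :=
          CovAux.covN_le_ncard hδ (hXb.add hXb)
      _ ≤ 2 * (CovAux.dz δ X + CovAux.dz δ X).ncard :=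
          CovAux.ncard_le_two_mul (fX.add fX) (CovAux.dz_add_subset hδ X X)
      _ = 2 * (AX + AX).card := by rw [hsumXX]
  have hY : covN δ Y ≤ AY.card := by
    calc covN δ Y ≤ (CovAux.dz δ Y).ncard := CovAux.covN_le_ncard hδ hYb
      _ = AY.card := hAYcard
  -- lower bounds for the right sides
  have hr1 : (AX + AY).card ≤ 6 * covN δ (X + Y) := by
    calc (AX + AY).card = (CovAux.dz δ X + CovAux.dz δ Y).ncard := hsum.symm
      _ ≤ 2 * (CovAux.dz δ (X + Y)).ncard :=
          CovAux.ncard_le_two_mul (CovAux.dz_finite hδ (hXb.add hYb))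
            (CovAux.dz_add_superset hδ X Y)
      _ ≤ 2 * (3 * covN δ (X + Y)) :=
          Nat.mul_le_mul_left 2 (CovAux.ncard_le_three hδ (hXb.add hYb))
      _ = 6 * covN δ (X + Y) := by ring
  have hr2 : (AX - AY).card ≤ 6 * covN δ (X - Y) := by
    calc (AX - AY).card = (CovAux.dz δ X - CovAux.dz δ Y).ncard := hsubXY.symm
      _ ≤ 2 * (CovAux.dz δ (X - Y)).ncard :=
          CovAux.ncard_le_two_mul (CovAux.dz_finite hδ (hXb.sub hYb))
            (CovAux.dz_sub_superset hδ X Y)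
      _ ≤ 2 * (3 * covN δ (X - Y)) :=
          Nat.mul_le_mul_left 2 (CovAux.ncard_le_three hδ (hXb.sub hYb))
      _ = 6 * covN δ (X - Y) := by ring
  -- Ruzsa / Plünnecke inequalities on the finsets
  have hcardneg : (AY - AX).card = (AX - AY).card := by
    rw [show AY - AX = -(AX - AY) from (neg_sub _ _).symm, Finset.card_neg]
  have rz1 : (AX - AX).card * AY.card ≤ (AX + AY).card * (AX + AY).card := by
    have := Finset.ruzsa_triangle_inequality_sub_sub_sub AX (-AY) AX
    rwa [sub_neg_eq_add, Finset.card_neg] at this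
  have rz2 : (AX + AX).card * AY.card ≤ (AX + AY).card * (AX + AY).card := by
    have := Finset.ruzsa_triangle_inequality_add_add_add AX AY AX
    rwa [add_comm AY AX] at this
  have rz3 : (AX - AX).card * AY.card ≤ (AX - AY).card * (AX - AY).card :=
    Finset.ruzsa_triangle_inequality_sub_sub_sub AX AY AX
  have rz4 : (AX + AX).card * AY.card ≤ (AX - AY).card * (AX - AY).card := by
    have := Finset.ruzsa_triangle_inequality_add_sub_sub AX AY AX
    rwa [hcardneg] at this
  -- combine, in ℕ
  have n11 : covN δ (X - X) * covN δ Y ≤ 72 * covN δ (X + Y) ^ 2 :=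
    CovAux.chain h1 hY rz1 hr1
  have n12 : covN δ (X + X) * covN δ Y ≤ 72 * covN δ (X + Y) ^ 2 :=
    CovAux.chain h2 hY rz2 hr1
  have n21 : covN δ (X - X) * covN δ Y ≤ 72 * covN δ (X - Y) ^ 2 :=
    CovAux.chain h1 hY rz3 hr2
  have n22 : covN δ (X + X) * covN δ Y ≤ 72 * covN δ (X - Y) ^ 2 :=
    CovAux.chain h2 hY rz4 hr2
  constructor
  · rw [max_mul_of_nonneg _ _ (Nat.cast_nonneg _)]
    exact max_le (by exact_mod_cast n11) (by exact_mod_cast n12)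
  · rw [max_mul_of_nonneg _ _ (Nat.cast_nonneg _)]
    exact max_le (by exact_mod_cast n21) (by exact_mod_cast n22)
end

section
/- Fix δ = 2^{−n} for some n ∈ ℕ, s > 0, and constants K, L ≥ 1. Let μ be a Borel probability measure on ℝᵈ with I_s(μ) ≤ K. Then there exists a Borel set A ⊆ supp(μ) with μ(ℝᵈ \ A) ≤ C_s / L (C_s depending only on s and d) such that μ(Q) ≤ C_d K L · (side length of Q)^{s/2} for every dyadic cube Q of side length between δ and 1 intersecting A; in particular A supports a (δ, s/2, O_d(KL))-type Frostman non-concentration estimate. -/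
open MeasureTheory
open scoped ENNReal

/-- The Riesz `s`-energy `I_s(μ) = ∬ |x − y|^{−s} dμ(x) dμ(y)`. -/
noncomputable def rieszEnergy {X : Type*} [PseudoEMetricSpace X] [MeasurableSpace X]
    (s : ℝ) (μ : Measure X) : ℝ≥0∞ :=
  ∫⁻ x, ∫⁻ y, (edist x y) ^ (-s) ∂μ ∂μ

/-- The support of a measure: points all of whose open neighbourhoods have positive measure. -/
def msupport {X : Type*} [TopologicalSpace X] [MeasurableSpace X]
    (μ : Measure X) : Set X :=
  {x | ∀ U : Set X, IsOpen U → x ∈ U → 0 < μ U}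

lemma msupport_compl_eq {X : Type*} [TopologicalSpace X] [MeasurableSpace X]
    (μ : Measure X) : (msupport μ)ᶜ = ⋃₀ {U : Set X | IsOpen U ∧ μ U = 0} := by
  ext x
  simp only [Set.mem_compl_iff, msupport, Set.mem_setOf_eq, Set.mem_sUnion, not_forall]
  constructor
  · rintro ⟨U, hU, hxU, hμ⟩
    exact ⟨U, ⟨hU, by simpa using hμ⟩, hxU⟩
  · rintro ⟨U, ⟨hU, hμ⟩, hxU⟩
    exact ⟨U, hU, hxU, by simp [hμ]⟩

lemma isClosed_msupport {X : Type*} [TopologicalSpace X] [MeasurableSpace X]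
    (μ : Measure X) : IsClosed (msupport μ) := by
  rw [← isOpen_compl_iff, msupport_compl_eq]
  exact isOpen_sUnion fun U hU => hU.1

lemma measure_msupport_compl {X : Type*} [TopologicalSpace X] [MeasurableSpace X]
    [SecondCountableTopology X]
    (μ : Measure X) : μ (msupport μ)ᶜ = 0 := by
  rw [msupport_compl_eq]
  obtain ⟨T, hTc, hTsub, hTU⟩ := TopologicalSpace.isOpen_sUnion_countable
    {U : Set X | IsOpen U ∧ μ U = 0} (fun U hU => hU.1)
  rw [← hTU]
  exact (measure_sUnion_null_iff hTc).2 fun U hU => (hTsub hU).2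

/-- A probability measure with `s`-energy at most `K` has a subset of its support of measure
`≥ 1 − C_s/L` on which a Frostman condition with exponent `s/2` holds on all dyadic cubes of
side length between `δ = 2^{−n}` and `1` meeting it. -/
theorem energy_to_frostman (d : ℕ) (s : ℝ) (hs : 0 < s) :
    ∃ Cs Cd : ℝ, 0 < Cs ∧ 0 < Cd ∧ ∀ K L : ℝ, 1 ≤ K → 1 ≤ L → ∀ n : ℕ,
      ∀ μ : Measure (Fin d → ℝ), IsProbabilityMeasure μ →
        rieszEnergy s μ ≤ ENNReal.ofReal K →
      ∃ A : Set (Fin d → ℝ), MeasurableSet A ∧ A ⊆ msupport μ ∧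
        μ Aᶜ ≤ ENNReal.ofReal (Cs / L) ∧
        ∀ j : ℕ, j ≤ n → ∀ k : Fin d → ℤ,
          ((Set.univ.pi fun i => Set.Ico ((k i : ℝ) * 2 ^ (-(j:ℝ)))
              (((k i : ℝ) + 1) * 2 ^ (-(j:ℝ)))) ∩ A).Nonempty →
          μ (Set.univ.pi fun i => Set.Ico ((k i : ℝ) * 2 ^ (-(j:ℝ)))
              (((k i : ℝ) + 1) * 2 ^ (-(j:ℝ)))) ≤
            ENNReal.ofReal (Cd * K * L * (2 ^ (-(j:ℝ))) ^ (s/2)) := by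
  refine ⟨1, 1, one_pos, one_pos, fun K L hK hL n μ hμ hE => ?_⟩
  have hK0 : (0:ℝ) < K := lt_of_lt_of_le one_pos hK
  have hL0 : (0:ℝ) < L := lt_of_lt_of_le one_pos hL
  set f : (Fin d → ℝ) → ℝ≥0∞ := fun x => ∫⁻ y, (edist x y) ^ (-s) ∂μ with hfdef
  have hmg : Measurable fun p : (Fin d → ℝ) × (Fin d → ℝ) => (edist p.1 p.2) ^ (-s) :=
    ENNReal.continuous_rpow_const.measurable.comp measurable_edist
  have hf : Measurable f := hmg.lintegral_prod_right'
  set T : ℝ≥0∞ := ENNReal.ofReal (K * L) with hTdef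
  have hT0 : T ≠ 0 := by
    simp [hTdef, ENNReal.ofReal_eq_zero, not_le, mul_pos hK0 hL0]
  have hTtop : T ≠ ∞ := ENNReal.ofReal_ne_top
  set S : Set (Fin d → ℝ) := {x | f x ≤ T} with hSdef
  have hSm : MeasurableSet S := measurableSet_le hf measurable_const
  refine ⟨msupport μ ∩ S, ((isClosed_msupport μ).measurableSet).inter hSm,
    Set.inter_subset_left, ?_, ?_⟩
  · -- complement bound
    have h1 : μ ((msupport μ ∩ S)ᶜ) ≤ μ (msupport μ)ᶜ + μ Sᶜ := by
      rw [Set.compl_inter]; exact measure_union_le _ _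
    have h2 : μ Sᶜ ≤ ENNReal.ofReal (1 / L) := by
      have hsub : Sᶜ ⊆ {x | T ≤ f x} := by
        intro x hx
        simp only [hSdef, Set.mem_compl_iff, Set.mem_setOf_eq, not_le] at hx
        exact hx.le
      have hmk := meas_ge_le_lintegral_div (μ := μ) hf.aemeasurable hT0 hTtop
      have hEn : (∫⁻ a, f a ∂μ) = rieszEnergy s μ := rfl
      calc μ Sᶜ ≤ μ {x | T ≤ f x} := measure_mono hsub
        _ ≤ (∫⁻ a, f a ∂μ) / T := hmk
        _ ≤ ENNReal.ofReal K / ENNReal.ofReal (K * L) := by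
            rw [hEn]; exact ENNReal.div_le_div_right hE T
        _ = ENNReal.ofReal (K / (K * L)) := by
            rw [ENNReal.ofReal_div_of_pos (mul_pos hK0 hL0)]
        _ = ENNReal.ofReal (1 / L) := by
            congr 1; field_simp
    calc μ ((msupport μ ∩ S)ᶜ) ≤ μ (msupport μ)ᶜ + μ Sᶜ := h1
      _ = μ Sᶜ := by rw [measure_msupport_compl, zero_add]
      _ ≤ ENNReal.ofReal (1 / L) := h2
  · -- Frostman bound
    intro j hj k ⟨x, hxQ, hxsupp, hxS⟩
    set c : ℝ := (2:ℝ) ^ (-(j:ℝ)) with hcdef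
    have hc : 0 < c := Real.rpow_pos_of_pos two_pos _
    have hc1 : c ≤ 1 := Real.rpow_le_one_of_one_le_of_nonpos one_le_two
      (neg_nonpos.mpr (Nat.cast_nonneg j))
    set Q : Set (Fin d → ℝ) := Set.univ.pi fun i => Set.Ico ((k i : ℝ) * c)
      (((k i : ℝ) + 1) * c) with hQdef
    have key : ∀ y ∈ Q, ENNReal.ofReal (c ^ (-s)) ≤ (edist x y) ^ (-s) := by
      intro y hy
      have hed : edist x y ≤ ENNReal.ofReal c := by
        refine edist_pi_le_iff.mpr fun i => ?_
        rw [edist_dist, Real.dist_eq]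
        refine ENNReal.ofReal_le_ofReal ?_
        have hx1 := hxQ i (Set.mem_univ i)
        have hy1 := hy i (Set.mem_univ i)
        simp only [Set.mem_Ico] at hx1 hy1
        rw [abs_sub_le_iff]
        constructor <;> nlinarith [hx1.1, hx1.2, hy1.1, hy1.2]
      rw [← ENNReal.ofReal_rpow_of_pos hc]
      rw [ENNReal.rpow_neg, ENNReal.rpow_neg]
      exact ENNReal.inv_le_inv.mpr (ENNReal.rpow_le_rpow hed hs.le)
    have hQm : MeasurableSet Q :=
      MeasurableSet.univ_pi fun i => measurableSet_Ico
    have step : ENNReal.ofReal (c ^ (-s)) * μ Q ≤ T := by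
      have h1 : ENNReal.ofReal (c ^ (-s)) * μ Q
          = ∫⁻ y in Q, ENNReal.ofReal (c ^ (-s)) ∂μ := by
        rw [setLIntegral_const, mul_comm]
      have h2 : (∫⁻ y in Q, ENNReal.ofReal (c ^ (-s)) ∂μ)
          ≤ ∫⁻ y in Q, (edist x y) ^ (-s) ∂μ :=
        setLIntegral_mono (ENNReal.continuous_rpow_const.measurable.comp
          (measurable_const.edist measurable_id)) key
      have h3 : (∫⁻ y in Q, (edist x y) ^ (-s) ∂μ) ≤ f x :=
        setLIntegral_le_lintegral _ _
      exact h1 ▸ ((h2.trans h3).trans hxS)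
    have hC0 : ENNReal.ofReal (c ^ (-s)) ≠ 0 := by
      simp [ENNReal.ofReal_eq_zero, not_le, Real.rpow_pos_of_pos hc]
    have hCtop : ENNReal.ofReal (c ^ (-s)) ≠ ∞ := ENNReal.ofReal_ne_top
    have hQle : μ Q ≤ T / ENNReal.ofReal (c ^ (-s)) := by
      rw [ENNReal.le_div_iff_mul_le (Or.inl hC0) (Or.inl hCtop), mul_comm]
      exact step
    have hdiv : T / ENNReal.ofReal (c ^ (-s)) = ENNReal.ofReal (K * L * c ^ s) := by
      rw [hTdef, ← ENNReal.ofReal_div_of_pos (Real.rpow_pos_of_pos hc _)]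
      congr 1
      rw [Real.rpow_neg hc.le, division_def, inv_inv]
    refine hQle.trans (hdiv ▸ ENNReal.ofReal_le_ofReal ?_)
    have hcs : c ^ s ≤ c ^ (s / 2) :=
      Real.rpow_le_rpow_of_exponent_ge hc hc1 (half_le_self hs.le)
    have : K * L * c ^ s ≤ K * L * c ^ (s/2) :=
      mul_le_mul_of_nonneg_left hcs (by positivity)
    linarith
end

section
/- Fix x ∈ ℝ, and let π(a, b) = a + x b. Let A, B ⊆ ℝ be bounded measurable sets with vol(A) > 0, and let G ⊆ A × B be measurable. Then vol₁(π(G)) ≥ vol₂(G) · vol₁(A + xA) / (vol₁(A − A) · vol₁(A − B)), where vol₁ and vol₂ denote Lebesgue measure on ℝ and ℝ², respectively. -/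
open MeasureTheory
open scoped Pointwise ENNReal

noncomputable section BourgainAux

/-- The shear `(a,b) ↦ (a + x b, b)` as a measurable equivalence of `ℝ × ℝ`. -/
def shearEquiv (x : ℝ) : (ℝ × ℝ) ≃ᵐ (ℝ × ℝ) where
  toFun p := (p.1 + x * p.2, p.2)
  invFun p := (p.1 - x * p.2, p.2)
  left_inv p := by simp
  right_inv p := by simp
  measurable_toFun := by
    exact (measurable_fst.add (measurable_const.mul measurable_snd)).prodMk measurable_snd
  measurable_invFun := by
    exact (measurable_fst.sub (measurable_const.mul measurable_snd)).prodMk measurable_snd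

lemma shearEquiv_coe (x : ℝ) : ⇑(shearEquiv x) = fun p : ℝ × ℝ => (p.1 + x * p.2, p.2) := rfl

lemma shearEquiv_symm_coe (x : ℝ) :
    ⇑(shearEquiv x).symm = fun p : ℝ × ℝ => (p.1 - x * p.2, p.2) := rfl

lemma shearEquiv_measurePreserving (x : ℝ) :
    MeasurePreserving (shearEquiv x) (volume : Measure (ℝ × ℝ)) volume := by
  have h1 : MeasurePreserving (fun p : ℝ × ℝ => (p.1, p.2 + x * p.1))
      ((volume : Measure ℝ).prod volume) ((volume : Measure ℝ).prod volume) := by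
    refine MeasurePreserving.skew_product (g := fun a c => c + x * a)
      (MeasurePreserving.id (volume : Measure ℝ))
      (measurable_snd.add (measurable_const.mul measurable_fst))
      (Filter.Eventually.of_forall fun a => ?_)
    exact (measurePreserving_add_right volume (x * a)).map_eq
  have h2 : MeasurePreserving Prod.swap ((volume : Measure ℝ).prod volume)
      ((volume : Measure ℝ).prod volume) :=
    Measure.measurePreserving_swap
  have h3 := (h2.comp h1).comp h2
  rw [Measure.volume_eq_prod, shearEquiv_coe]
  exact h3

/-- Outer-measure invariance under a measure-preserving measurable equivalence. -/
lemma measure_preimage_equiv {α : Type*} [MeasurableSpace α] {μ : Measure α}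
    (e : α ≃ᵐ α) (h : MeasurePreserving e μ μ) (S : Set α) : μ (e ⁻¹' S) = μ S := by
  calc μ (e ⁻¹' S) = μ.map e S := (e.map_apply S).symm
  _ = μ S := by rw [h.map_eq]

/-- Key slice estimate: for every `u`, the fibre of the projection over `u` satisfies
`vol(F_u) ⋅ vol(A + xA) ≤ vol(A − A) ⋅ vol(A − B)`. -/
lemma bourgain_key (x u : ℝ) (A B : Set ℝ) (G : Set (ℝ × ℝ))
    (hG : MeasurableSet G) (hGsub : G ⊆ A ×ˢ B) :
    volume {b : ℝ | (u - x * b, b) ∈ G} * volume (A + x • A) ≤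
      volume (A - A) * volume (A - B) := by
  set F : Set ℝ := {b : ℝ | (u - x * b, b) ∈ G} with hF_def
  have hFmem : ∀ b ∈ F, (u - x * b) ∈ A ∧ b ∈ B := by
    intro b hb
    exact hGsub hb
  -- the auxiliary set in sheared coordinates
  set E2 : Set (ℝ × ℝ) :=
    {q | ∃ α ∈ A, ∃ α' ∈ A, ∃ b ∈ F, q = (α + x * α' - u, α' - b)} with hE2_def
  -- upper bound : vol E2 ≤ vol(A−A) vol(A−B)
  have hupper : volume E2 ≤ volume (A - A) * volume (A - B) := by
    have hsub : E2 ⊆ (shearEquiv x).symm ⁻¹' ((A - A) ×ˢ (A - B)) := by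
      rintro q ⟨α, hα, α', hα', b, hb, rfl⟩
      have h1 : (α + x * α' - u) - x * (α' - b) ∈ A - A := by
        have : (α + x * α' - u) - x * (α' - b) = α - (u - x * b) := by ring
        rw [this]
        exact Set.sub_mem_sub hα (hFmem b hb).1
      have h2 : α' - b ∈ A - B := Set.sub_mem_sub hα' (hFmem b hb).2
      exact ⟨h1, h2⟩
    calc volume E2 ≤ volume ((shearEquiv x).symm ⁻¹' ((A - A) ×ˢ (A - B))) :=
          measure_mono hsub
      _ = volume ((A - A) ×ˢ (A - B)) :=
          measure_preimage_equiv _ ((shearEquiv_measurePreserving x).symm _) _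
      _ = volume (A - A) * volume (A - B) := by
          rw [Measure.volume_eq_prod]; exact Measure.prod_prod _ _
  -- lower bound : vol F ⋅ vol (A + x • A) ≤ vol E2
  have hlower : volume F * volume (A + x • A) ≤ volume E2 := by
    set K : Set (ℝ × ℝ) := toMeasurable volume E2 with hK_def
    have hK : MeasurableSet K := measurableSet_toMeasurable _ _
    have hKE : volume K = volume E2 := measure_toMeasurable _
    -- slices of K
    have hslice : ∀ s ∈ (· + u) ⁻¹' (A + x • A), volume F ≤ volume (Prod.mk s ⁻¹' K) := by
      rintro s hs
      obtain ⟨α, hα, w, ⟨α', hα', rfl⟩, hsum⟩ := hs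
      have hs' : s = α + x * α' - u := by
        simp only [smul_eq_mul] at hsum
        linarith
      have hsub : F ⊆ (fun b => α' - b) ⁻¹' (Prod.mk s ⁻¹' K) := by
        intro b hb
        have : (s, α' - b) ∈ E2 := by
          refine ⟨α, hα, α', hα', b, hb, ?_⟩
          rw [hs']
        exact subset_toMeasurable _ _ this
      calc volume F ≤ volume ((fun b => α' - b) ⁻¹' (Prod.mk s ⁻¹' K)) := measure_mono hsub
        _ = volume (Prod.mk s ⁻¹' K) :=
          measure_preimage_equiv (MeasurableEquiv.subLeft α')
            (Measure.measurePreserving_sub_left volume α') _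
    -- integrate slices
    have hmeas : Measurable fun s => volume (Prod.mk s ⁻¹' K) :=
      measurable_measure_prodMk_left hK
    set T : Set ℝ := {s | volume F ≤ volume (Prod.mk s ⁻¹' K)} with hT_def
    have hT : MeasurableSet T := measurableSet_le measurable_const hmeas
    have hsubT : (· + u) ⁻¹' (A + x • A) ⊆ T := hslice
    have hvolT : volume (A + x • A) ≤ volume T := by
      calc volume (A + x • A) = volume ((· + u) ⁻¹' (A + x • A)) :=
            (measure_preimage_equiv (MeasurableEquiv.addRight u)
              (measurePreserving_add_right volume u) _).symm
        _ ≤ volume T := measure_mono hsubT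
    calc volume F * volume (A + x • A) ≤ volume F * volume T := by
          exact mul_le_mul_right hvolT _
      _ = ∫⁻ s in T, volume F := by rw [setLIntegral_const, mul_comm]
      _ ≤ ∫⁻ s in T, volume (Prod.mk s ⁻¹' K) := by
          refine setLIntegral_mono hmeas fun s hs => hs
      _ ≤ ∫⁻ s, volume (Prod.mk s ⁻¹' K) := setLIntegral_le_lintegral _ _
      _ = volume K := by rw [Measure.volume_eq_prod]; exact (Measure.prod_apply hK).symm
      _ = volume E2 := hKE
  exact hlower.trans hupper

end BourgainAux

/-- Bourgain's lemma lower-bounding projections of subsets of Cartesian products: with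
`π(a,b) = a + x b`, for `G ⊆ A × B` one has
`vol(π(G)) ⋅ vol(A − A) ⋅ vol(A − B) ≥ vol(G) ⋅ vol(A + xA)`. -/
theorem bourgain_product_projection (x : ℝ) (A B : Set ℝ) (G : Set (ℝ × ℝ))
    (hA : MeasurableSet A) (hB : MeasurableSet B)
    (hAb : Bornology.IsBounded A) (hBb : Bornology.IsBounded B)
    (hApos : 0 < volume A)
    (hG : MeasurableSet G) (hGsub : G ⊆ A ×ˢ B) :
    volume G * volume (A + x • A) ≤
      volume ((fun p : ℝ × ℝ => p.1 + x * p.2) '' G) *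
        (volume (A - A) * volume (A - B)) := by
  set G' : Set (ℝ × ℝ) := (shearEquiv x).symm ⁻¹' G with hG'_def
  have hG' : MeasurableSet G' := (shearEquiv x).symm.measurable hG
  have hGG' : volume G = volume G' := by
    exact (measure_preimage_equiv _ ((shearEquiv_measurePreserving x).symm _) _).symm
  have hslice : ∀ u : ℝ, Prod.mk u ⁻¹' G' = {b : ℝ | (u - x * b, b) ∈ G} := by
    intro u; rfl
  have hGint : volume G' = ∫⁻ u, volume {b : ℝ | (u - x * b, b) ∈ G} := by
    rw [Measure.volume_eq_prod, Measure.prod_apply hG']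
    exact lintegral_congr fun u => by rw [hslice]
  set P : Set ℝ := (fun p : ℝ × ℝ => p.1 + x * p.2) '' G with hP_def
  set H : Set ℝ := toMeasurable volume P with hH_def
  have hH : MeasurableSet H := measurableSet_toMeasurable _ _
  have hHP : volume H = volume P := measure_toMeasurable _
  set D : ℝ≥0∞ := volume (A - A) * volume (A - B) with hD_def
  have hbound : ∀ u : ℝ,
      volume {b : ℝ | (u - x * b, b) ∈ G} * volume (A + x • A) ≤
        H.indicator (fun _ => D) u := by
    intro u
    by_cases hu : u ∈ H
    · rw [Set.indicator_of_mem hu]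
      exact bourgain_key x u A B G hG hGsub
    · rw [Set.indicator_of_notMem hu]
      have : {b : ℝ | (u - x * b, b) ∈ G} = ∅ := by
        ext b
        simp only [Set.mem_setOf_eq, Set.mem_empty_iff_false, iff_false]
        intro hb
        apply hu
        apply subset_toMeasurable volume P
        refine ⟨(u - x * b, b), hb, ?_⟩
        simp
      rw [this]
      simp
  have hmeasF : Measurable fun u => volume {b : ℝ | (u - x * b, b) ∈ G} :=
    measurable_measure_prodMk_left hG'
  calc volume G * volume (A + x • A)
      = (∫⁻ u, volume {b : ℝ | (u - x * b, b) ∈ G}) * volume (A + x • A) := by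
        rw [hGG', hGint]
    _ = ∫⁻ u, volume {b : ℝ | (u - x * b, b) ∈ G} * volume (A + x • A) := by
        rw [lintegral_mul_const _ hmeasF]
    _ ≤ ∫⁻ u, H.indicator (fun _ => D) u := lintegral_mono hbound
    _ = D * volume H := by rw [lintegral_indicator hH, setLIntegral_const, mul_comm]
    _ = volume P * D := by rw [hHP, mul_comm]
end

section
/- Let A ⊆ ℝ be a compact set with diam(A) > 0, let n ≥ 2, and let v ∈ [1/2, 1]ⁿ with π(x) = v·x for x ∈ ℝⁿ. Suppose the projection π(Aⁿ) has positive Lebesgue measure λ > 0. Then there exists a positive integer N, depending only on n, diam(A), and λ, such that, after reordering the coordinates of v, the set v₁A₁ + ⋯ + v_{n−1}A₁ has Lebesgue measure at least diam(A)·λ, where A₁ = N A^{(2)} − N A^{(2)}. -/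
/-!
By Steinhaus, `π(Aⁿ) - π(Aⁿ) ⊆ π((A - A)ⁿ)` is a neighbourhood of `0`. The map `π` cannot be
injective on the compact set `(A - A)ⁿ`: otherwise it is a homeomorphism onto its image, so a
connected piece of `(A - A)ⁿ` maps onto an interval, one of its coordinate projections is an
interval inside `A - A`, and then `(A - A)ⁿ` contains a box, on which a linear functional on `ℝⁿ`,
`n ≥ 2`, is never injective. Two points with the same image give `g ≠ 0` with coordinates in
`(A - A) - (A - A)` and `v ⬝ᵥ g = 0`. If `g j ≠ 0`, then for `x ∈ Aⁿ`
`k g_j (v ⬝ᵥ x) = ∑_{i ≠ j} v_i k (g_j x_i - g_i x_j)`, and each `k (g_j x_i - g_i x_j)` lies in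
`A₁` for `N = 4k`. So `(k g_j) • π(Aⁿ) ⊆ v₁A₁ + ⋯ + v_{n-1}A₁` after moving `j` to the last
position, and `k ≥ diam A / |g_j|` gives the measure bound.
-/

open MeasureTheory
open scoped Pointwise ENNReal

/-- The `N`-fold sumset `{x₁ + ⋯ + x_N : x_i ∈ S}`. -/
def sumN (N : ℕ) (S : Set ℝ) : Set ℝ :=
  {x | ∃ f : Fin N → ℝ, (∀ i, f i ∈ S) ∧ x = ∑ i, f i}

open Set Filter Topology

section sumN

variable {S B : Set ℝ} {M M' : ℕ} {u u' x : ℝ}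

lemma mem_sumN_one (hx : x ∈ S) : x ∈ sumN 1 S :=
  ⟨fun _ => x, fun _ => hx, by simp⟩

lemma add_mem_sumN (hu : u ∈ sumN M S) (hu' : u' ∈ sumN M' S) : u + u' ∈ sumN (M + M') S := by
  obtain ⟨f, hf, rfl⟩ := hu
  obtain ⟨f', hf', rfl⟩ := hu'
  exact ⟨Fin.append f f', Fin.addCases (by simpa using hf) (by simpa using hf'),
    by simp [Fin.sum_univ_add]⟩

lemma natCast_mul_mem_sumN (hu : u ∈ sumN M S) (k : ℕ) : (k : ℝ) * u ∈ sumN (k * M) S := by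
  induction k with
  | zero => rw [Nat.zero_mul]; exact ⟨Fin.elim0, fun i => i.elim0, by simp⟩
  | succ k ih => simpa [add_mul, Nat.succ_mul] using add_mem_sumN ih hu

lemma mul_mem_sumN_mul (hu : u ∈ sumN M S) (hx : x ∈ B) : u * x ∈ sumN M (S * B) := by
  obtain ⟨f, hf, rfl⟩ := hu
  exact ⟨fun i => f i * x, fun i => mul_mem_mul (hf i) hx, Finset.sum_mul ..⟩

lemma sub_sub_sub_subset_sumN_two : (S - S) - (S - S) ⊆ sumN 2 S - sumN 2 S := by
  rintro _ ⟨_, ⟨a, ha, b, hb, rfl⟩, _, ⟨c, hc, d, hd, rfl⟩, rfl⟩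
  exact ⟨a + d, add_mem_sumN (mem_sumN_one ha) (mem_sumN_one hd),
    b + c, add_mem_sumN (mem_sumN_one hb) (mem_sumN_one hc), by ring⟩

lemma natCast_mul_mem_sumN_sub (hu : u ∈ sumN M S - sumN M S) (k : ℕ) :
    (k : ℝ) * u ∈ sumN (k * M) S - sumN (k * M) S := by
  obtain ⟨a, ha, b, hb, rfl⟩ := hu
  exact ⟨_, natCast_mul_mem_sumN ha k, _, natCast_mul_mem_sumN hb k, by ring⟩

lemma sub_mul_sub_mul_mem_sumN {a b y : ℝ} (ha : a ∈ sumN M S - sumN M S)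
    (hb : b ∈ sumN M S - sumN M S) (hx : x ∈ B) (hy : y ∈ B) :
    a * x - b * y ∈ sumN (M + M) (S * B) - sumN (M + M) (S * B) := by
  obtain ⟨s, hs, t, ht, rfl⟩ := ha
  obtain ⟨s', hs', t', ht', rfl⟩ := hb
  exact ⟨s * x + t' * y, add_mem_sumN (mul_mem_sumN_mul hs hx) (mul_mem_sumN_mul ht' hy),
    t * x + s' * y, add_mem_sumN (mul_mem_sumN_mul ht hx) (mul_mem_sumN_mul hs' hy), by ring⟩

end sumN

lemma sum_castLE_comp_perm {m : ℕ} (e : Equiv.Perm (Fin (m + 1))) (f : Fin (m + 1) → ℝ) :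
    ∑ i : Fin (m + 1 - 1), f (e (Fin.castLE (Nat.sub_le (m + 1) 1) i)) =
      ∑ i, f i - f (e (Fin.last m)) := by
  rw [← Equiv.sum_comp e f, Fin.sum_univ_castSucc, add_sub_cancel_right]
  rfl

lemma IsCompact.isPreconnected_inter_preimage {X Y : Type*} [TopologicalSpace X]
    [TopologicalSpace Y] [T2Space Y] {T : Set X} {φ : X → Y} {s : Set Y} (hT : IsCompact T)
    (hφ : Continuous φ) (hinj : InjOn φ T) (hs : IsPreconnected s) (hsT : s ⊆ φ '' T) :
    IsPreconnected (T ∩ φ ⁻¹' s) := by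
  have : CompactSpace T := isCompact_iff_compactSpace.mp hT
  have hpre : IsPreconnected (((↑) : T → X) ⁻¹' (φ ⁻¹' s)) :=
    hs.preimage_of_isClosedMap hinj.injective (hφ.comp continuous_subtype_val).isClosedMap
      fun y hy => by obtain ⟨x, hx, rfl⟩ := hsT hy; exact ⟨⟨x, hx⟩, rfl⟩
  simpa only [Subtype.image_preimage_coe] using hpre.image _ continuous_subtype_val.continuousOn

lemma IsCompact.exists_image_eval_mem_nhds_of_injOn {ι : Type*} {T : Set (ι → ℝ)}
    (hT : IsCompact T) {φ : (ι → ℝ) → ℝ} (hφ : Continuous φ) (hinj : InjOn φ T) {y : ℝ}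
    (hy : φ '' T ∈ 𝓝 y) : ∃ i c, (fun x => x i) '' T ∈ 𝓝 c := by
  obtain ⟨r, hr, hball⟩ := Metric.nhds_basis_closedBall.mem_iff.mp hy
  rw [Real.closedBall_eq_Icc] at hball
  have hC := hT.isPreconnected_inter_preimage hφ hinj isPreconnected_Icc hball
  have hyr : y - r ≤ y + r := by linarith
  obtain ⟨p, hp, hpy⟩ := hball (left_mem_Icc.2 hyr)
  obtain ⟨q, hq, hqy⟩ := hball (right_mem_Icc.2 hyr)
  obtain ⟨i, hi⟩ : ∃ i, p i ≠ q i := by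
    by_contra! h
    have := hpy.symm.trans (congrArg φ (funext h) |>.trans hqy)
    linarith
  have hCi := isPreconnected_iff_ordConnected.mp (hC.image _ (continuous_apply i).continuousOn)
  have hsub : uIcc (p i) (q i) ⊆ (fun x => x i) '' T :=
    (hCi.uIcc_subset ⟨p, ⟨hp, by rw [mem_preimage, hpy]; exact left_mem_Icc.2 hyr⟩, rfl⟩
      ⟨q, ⟨hq, by rw [mem_preimage, hqy]; exact right_mem_Icc.2 hyr⟩, rfl⟩).trans
      (image_mono inter_subset_left)
  obtain ⟨c, hc⟩ := exists_between (min_lt_max.2 hi)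
  exact ⟨i, c, mem_of_superset (Ioo_mem_nhds hc.1 hc.2) (Ioo_subset_Icc_self.trans hsub)⟩

lemma LinearMap.not_injOn_of_mem_nhds {E F : Type*} [AddCommGroup E] [Module ℝ E]
    [TopologicalSpace E] [ContinuousAdd E] [ContinuousSMul ℝ E] [AddCommGroup F] [Module ℝ F]
    (f : E →ₗ[ℝ] F) (hf : LinearMap.ker f ≠ ⊥) {U : Set E} {c : E} (hU : U ∈ 𝓝 c) :
    ¬ InjOn f U := by
  intro hinj
  obtain ⟨w, hw, hw0⟩ := (Submodule.ne_bot_iff _).mp hf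
  have hlim : Tendsto (fun t : ℝ => c + t • w) (𝓝[≠] 0) (𝓝 c) :=
    (Continuous.tendsto' (by fun_prop) 0 c (by simp)).mono_left nhdsWithin_le_nhds
  obtain ⟨t, htU, ht⟩ := ((hlim.eventually_mem hU).and self_mem_nhdsWithin).exists
  have hct : c + t • w = c := hinj htU (mem_of_mem_nhds hU) (by simp [LinearMap.mem_ker.mp hw])
  exact hw0 ((smul_eq_zero.mp (add_eq_left.mp hct)).resolve_left ht)

lemma ker_dotProductBilin_ne_bot {n : ℕ} (hn : 2 ≤ n) (v : Fin n → ℝ) :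
    LinearMap.ker (dotProductBilin ℝ ℝ v) ≠ ⊥ :=
  LinearMap.ker_ne_bot_of_finrank_lt (by simp; omega)

lemma isCompact_setOf_forall_mem {ι X : Type*} [TopologicalSpace X] {K : Set X}
    (hK : IsCompact K) : IsCompact {x : ι → X | ∀ i, x i ∈ K} := by
  simpa [Set.pi] using isCompact_univ_pi fun _ : ι => hK

lemma exists_ne_zero_dotProduct_eq_zero_of_volume_image_pos {A : Set ℝ} (hA : IsCompact A)
    {n : ℕ} (hn : 2 ≤ n) {v : Fin n → ℝ} (hpos : 0 < volume ((v ⬝ᵥ ·) '' {x | ∀ i, x i ∈ A})) :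
    ∃ g ≠ 0, (∀ i, g i ∈ (A - A) - (A - A)) ∧ v ⬝ᵥ g = 0 := by
  set T : Set (Fin n → ℝ) := {x | ∀ i, x i ∈ A - A}
  have hT : IsCompact T :=
    isCompact_setOf_forall_mem (sub_image_prod (s := A) ▸ (hA.prod hA).image continuous_sub)
  have hπ : Continuous (v ⬝ᵥ ·) := by fun_prop
  have hsub : (v ⬝ᵥ ·) '' {x | ∀ i, x i ∈ A} - (v ⬝ᵥ ·) '' {x | ∀ i, x i ∈ A} ⊆
      (v ⬝ᵥ ·) '' T := by
    rintro _ ⟨_, ⟨x, hx, rfl⟩, _, ⟨y, hy, rfl⟩, rfl⟩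
    exact ⟨x - y, fun i => sub_mem_sub (hx i) (hy i), dotProduct_sub v x y⟩
  have hnhds : (v ⬝ᵥ ·) '' T ∈ 𝓝 0 :=
    mem_of_superset (Measure.sub_mem_nhds_zero_of_addHaar_pos volume _
      ((isCompact_setOf_forall_mem hA).image hπ).isClosed.measurableSet hpos) hsub
  have hninj : ¬ InjOn (v ⬝ᵥ ·) T := by
    intro hinj
    obtain ⟨i, c, hc⟩ := hT.exists_image_eval_mem_nhds_of_injOn hπ hinj hnhds
    have hAA : A - A ∈ 𝓝 c := mem_of_superset hc (by rintro _ ⟨x, hx, rfl⟩; exact hx i)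
    have hTc : T ∈ 𝓝 (fun _ => c) := by
      simpa [Set.pi] using set_pi_mem_nhds finite_univ fun i _ => hAA
    exact (dotProductBilin ℝ ℝ v).not_injOn_of_mem_nhds (ker_dotProductBilin_ne_bot hn v) hTc hinj
  simp only [InjOn, not_forall] at hninj
  obtain ⟨x, hx, y, hy, hxy, hne⟩ := hninj
  exact ⟨x - y, sub_ne_zero.2 hne, fun i => sub_mem_sub (hx i) (hy i),
    by rw [dotProduct_sub, hxy, sub_self]⟩

lemma smul_image_dotProduct_subset {A : Set ℝ} {m : ℕ} {v g : Fin (m + 1) → ℝ}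
    (hg : ∀ i, g i ∈ sumN 2 A - sumN 2 A) (hgv : v ⬝ᵥ g = 0) (k : ℕ)
    (e : Equiv.Perm (Fin (m + 1))) :
    ((k : ℝ) * g (e (Fin.last m))) • ((v ⬝ᵥ ·) '' {x | ∀ i, x i ∈ A}) ⊆
      {y | ∃ f : Fin (m + 1 - 1) → ℝ,
        (∀ i, f i ∈ sumN (k * 4) (A * A) - sumN (k * 4) (A * A)) ∧
        y = ∑ i : Fin (m + 1 - 1), v (e (Fin.castLE (Nat.sub_le (m + 1) 1) i)) * f i} := by
  rintro _ ⟨_, ⟨x, hx, rfl⟩, rfl⟩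
  set j := e (Fin.last m)
  set w : Fin (m + 1) → ℝ := (k : ℝ) • (g j • x - x j • g)
  have hw : ∀ i, w i = k * (g j * x i - g i * x j) := fun i => by simp [w, mul_comm]
  refine ⟨fun i => w (e (Fin.castLE (Nat.sub_le (m + 1) 1) i)), fun i => ?_, ?_⟩
  · dsimp only
    rw [hw]
    exact natCast_mul_mem_sumN_sub (sub_mul_sub_mul_mem_sumN (hg j) (hg _) (hx _) (hx j)) k
  · have hvw : v ⬝ᵥ w = k * g j * (v ⬝ᵥ x) := by
      simp only [w, dotProduct_smul, dotProduct_sub, hgv, smul_eq_mul]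
      ring
    dsimp only
    rw [smul_eq_mul, sum_castLE_comp_perm e (fun i => v i * w i), hw, sub_self, mul_zero,
      mul_zero, sub_zero]
    exact hvw.symm

theorem eliminate_coordinate_general (A : Set ℝ) (hA : IsCompact A)
    (n : ℕ) (hn : 2 ≤ n) (v : Fin n → ℝ)
    (hlam : 0 < volume ((fun x : Fin n → ℝ => ∑ i, v i * x i) '' {x | ∀ i, x i ∈ A})) :
    ∃ N : ℕ, 0 < N ∧ ∃ e : Equiv.Perm (Fin n),
      ENNReal.ofReal (Metric.diam A) *
          volume ((fun x : Fin n → ℝ => ∑ i, v i * x i) '' {x | ∀ i, x i ∈ A}) ≤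
        volume {y : ℝ | ∃ f : Fin (n-1) → ℝ,
          (∀ i, f i ∈ sumN N (A * A) - sumN N (A * A)) ∧
          y = ∑ i : Fin (n-1), v (e (Fin.castLE (Nat.sub_le n 1) i)) * f i} := by
  obtain ⟨g, hg0, hgA, hgv⟩ := exists_ne_zero_dotProduct_eq_zero_of_volume_image_pos hA hn hlam
  obtain ⟨j, hj⟩ := Function.ne_iff.mp hg0
  obtain ⟨k, hk⟩ := exists_nat_gt (Metric.diam A / |g j|)
  have hk0 : 0 < k := by
    exact_mod_cast (div_nonneg Metric.diam_nonneg (abs_nonneg _)).trans_lt hk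
  have hdiam : Metric.diam A ≤ |(k : ℝ) * g j| := by
    rw [abs_mul, Nat.abs_cast, ← div_le_iff₀ (abs_pos.2 hj)]
    exact hk.le
  obtain ⟨m, rfl⟩ : ∃ m, n = m + 1 := ⟨n - 1, by omega⟩
  have hsub := smul_image_dotProduct_subset (fun i => sub_sub_sub_subset_sumN_two (hgA i)) hgv k
    (Equiv.swap (Fin.last m) j)
  rw [Equiv.swap_apply_left] at hsub
  refine ⟨k * 4, by omega, Equiv.swap (Fin.last m) j, ?_⟩
  calc ENNReal.ofReal (Metric.diam A) * volume ((v ⬝ᵥ ·) '' {x | ∀ i, x i ∈ A})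
      ≤ ENNReal.ofReal |(k : ℝ) * g j| * volume ((v ⬝ᵥ ·) '' {x | ∀ i, x i ∈ A}) := by
        gcongr
    _ = volume (((k : ℝ) * g j) • (v ⬝ᵥ ·) '' {x | ∀ i, x i ∈ A}) := by
        simp [Measure.addHaar_smul]
    _ ≤ _ := measure_mono hsub

/-- The key Edgar–Miller-style lemma: if `A ⊆ ℝ` is compact with positive diameter,
`v ∈ [1/2,1]ⁿ` and the projection `π(x) = v ⋅ x` of `Aⁿ` has positive Lebesgue measure `λ`,
then for some `N` (depending only on `n`, `diam A`, `λ`) and after reordering the coordinates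
of `v`, the set `v₁A₁ + ⋯ + v_{n−1}A₁`, with `A₁ = N A^{(2)} − N A^{(2)}`, has Lebesgue
measure at least `diam(A) ⋅ λ`. -/
theorem eliminate_coordinate (A : Set ℝ) (hA : IsCompact A) (hdiam : 0 < Metric.diam A)
    (n : ℕ) (hn : 2 ≤ n) (v : Fin n → ℝ) (hv : ∀ i, v i ∈ Set.Icc (1/2 : ℝ) 1)
    (hlam : 0 < volume ((fun x : Fin n → ℝ => ∑ i, v i * x i) '' {x | ∀ i, x i ∈ A})) :
    ∃ N : ℕ, 0 < N ∧ ∃ e : Equiv.Perm (Fin n),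
      ENNReal.ofReal (Metric.diam A) *
          volume ((fun x : Fin n → ℝ => ∑ i, v i * x i) '' {x | ∀ i, x i ∈ A}) ≤
        volume {y : ℝ | ∃ f : Fin (n-1) → ℝ,
          (∀ i, f i ∈ sumN N (A * A) - sumN N (A * A)) ∧
          y = ∑ i : Fin (n-1), v (e (Fin.castLE (Nat.sub_le n 1) i)) * f i} :=
  eliminate_coordinate_general A hA n hn v hlam
end
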